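/- Let k be an algebraically closed field (of any characteristic) and let f be a nonzero binary quartic form over k with S(f) = 0. If f is divisible by the square of a nonzero linear form, then f is divisible by the cube of a nonzero linear form. Equivalently, a nonzero binary quartic form with vanishing invariant S either has four distinct roots in P¹(k) or has a root of multiplicity at least 3. -/

import Mathlib

/-!
Write `f = L² Q` with `L = p y + q z`. Only the quadratic part `a y² + b yz + c z²` of `Q` matters,
and expanding gives `S(L² Q) = (a q² - b p q + c p²)²`, the square of the value of `Q` at the root
`(q : -p)` of `L`. Hence `S(f) = 0` makes `L` divide `Q`, and `L³` divide `f`.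
-/

open MvPolynomial

noncomputable section

/-- The classical invariant `S` of a binary quartic form with coefficients `f 0, …, f 4`. -/
def Sinv {R : Type*} [CommRing R] (f : Fin 5 → R) : R :=
  12 * f 0 * f 4 - 3 * f 1 * f 3 + f 2 ^ 2

/-- The classical invariant `T` of a binary quartic form with coefficients `f 0, …, f 4`. -/
def Tinv {R : Type*} [CommRing R] (f : Fin 5 → R) : R :=
  72 * f 0 * f 2 * f 4 - 27 * f 0 * f 3 ^ 2 - 27 * f 1 ^ 2 * f 4
    + 9 * f 1 * f 2 * f 3 - 2 * f 2 ^ 3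

/-- The binary quartic form `f₀ y⁴ + f₁ y³z + f₂ y²z² + f₃ yz³ + f₄ z⁴`. -/
def binQuartic {R : Type*} [CommRing R] (f : Fin 5 → R) : MvPolynomial (Fin 2) R :=
  ∑ i : Fin 5, C (f i) * X 0 ^ (4 - (i : ℕ)) * X 1 ^ (i : ℕ)

/-- The `i`-th coefficient of a binary quartic form: coefficient of `y^(4-i) z^i`. -/
def binCoeff {R : Type*} [CommRing R] (g : MvPolynomial (Fin 2) R) (i : Fin 5) : R :=
  coeff (Finsupp.single 0 (4 - (i : ℕ)) + Finsupp.single 1 (i : ℕ)) g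

/-- The substitution `g(y,z) = q(-v·y - w·z, u·y, u·z)`, a binary quartic form in `y, z` with
coefficients in `R[u,v,w]`. -/
def gsub {R : Type*} [CommRing R] (q : MvPolynomial (Fin 3) R) :
    MvPolynomial (Fin 2) (MvPolynomial (Fin 3) R) :=
  aeval
    (![(C (- X 1) * X 0 - C (X 2) * X 1 : MvPolynomial (Fin 2) (MvPolynomial (Fin 3) R)),
       C (X 0) * X 0, C (X 0) * X 1]) q

/-- `u⁴ · H(q)`, the invariant `S` of `g(y,z) = q(-vy-wz, uy, uz)`; the harmonic quartic `H(q)`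
is the form determined by `u⁴ · H(q) = SG q`. -/
def SG {R : Type*} [CommRing R] (q : MvPolynomial (Fin 3) R) : MvPolynomial (Fin 3) R :=
  Sinv (fun i => binCoeff (gsub q) i)

/-- `u⁶ · K(q)`, the invariant `T` of `g(y,z) = q(-vy-wz, uy, uz)`; the harmonic sextic `K(q)`
is the form determined by `u⁶ · K(q) = TG q`. -/
def TG {R : Type*} [CommRing R] (q : MvPolynomial (Fin 3) R) : MvPolynomial (Fin 3) R :=
  Tinv (fun i => binCoeff (gsub q) i)

/-- dot product of two vectors in `R³`. -/
def dot3 {R : Type*} [CommRing R] (d a : Fin 3 → R) : R :=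
  d 0 * a 0 + d 1 * a 1 + d 2 * a 2

/-- restriction of a ternary form to the parameterized line `(y,z) ↦ y·a + z·b`. -/
def restrictLine {R : Type*} [CommRing R] (q : MvPolynomial (Fin 3) R) (a b : Fin 3 → R) :
    MvPolynomial (Fin 2) R :=
  aeval (fun i => C (a i) * X 0 + C (b i) * X 1) q

/-- A binary quartic form vanishes identically or has a root of multiplicity at least `3`:
`f = L³·M` with `L ≠ 0` linear and `M` linear (possibly zero). -/
def HasTripleRoot {R : Type*} [CommRing R] (f : MvPolynomial (Fin 2) R) : Prop :=
  ∃ L M : MvPolynomial (Fin 2) R,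
    L.IsHomogeneous 1 ∧ M.IsHomogeneous 1 ∧ L ≠ 0 ∧ f = L ^ 3 * M

/-- The line with dual coordinates `d` is an inflection line of the quartic `{q = 0}`. -/
def IsInflectionLine {k : Type*} [Field k] (q : MvPolynomial (Fin 3) k) (d : Fin 3 → k) :
    Prop :=
  d ≠ 0 ∧ ∃ a b : Fin 3 → k, LinearIndependent k ![a, b] ∧
    dot3 d a = 0 ∧ dot3 d b = 0 ∧ HasTripleRoot (restrictLine q a b)

/-- The line with dual coordinates `d` is a simple inflection line of `{q = 0}` with
inflection point `p`. -/
def IsSimpleInflectionLineAt {k : Type*} [Field k] (q : MvPolynomial (Fin 3) k)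
    (d p : Fin 3 → k) : Prop :=
  d ≠ 0 ∧ ∃ (a b : Fin 3 → k) (s t : k), LinearIndependent k ![a, b] ∧
    dot3 d a = 0 ∧ dot3 d b = 0 ∧ (s, t) ≠ (0, 0) ∧
    (∀ i, p i = s * a i + t * b i) ∧
    eval p q = 0 ∧ (∃ i, eval p (pderiv i q) ≠ 0) ∧
    ∃ L M : MvPolynomial (Fin 2) k, L.IsHomogeneous 1 ∧ M.IsHomogeneous 1 ∧
      LinearIndependent k ![L, M] ∧
      restrictLine q a b = L ^ 3 * M ∧ eval ![s, t] L = 0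

/-- The line with dual coordinates `d` is a hyperinflection line of `{q = 0}` with
hyperinflection point `p`. -/
def IsHyperinflectionLineAt {k : Type*} [Field k] (q : MvPolynomial (Fin 3) k)
    (d p : Fin 3 → k) : Prop :=
  d ≠ 0 ∧ ∃ (a b : Fin 3 → k) (s t : k), LinearIndependent k ![a, b] ∧
    dot3 d a = 0 ∧ dot3 d b = 0 ∧ (s, t) ≠ (0, 0) ∧
    (∀ i, p i = s * a i + t * b i) ∧
    eval p q = 0 ∧ (∃ i, eval p (pderiv i q) ≠ 0) ∧
    ∃ (c : k) (L : MvPolynomial (Fin 2) k), c ≠ 0 ∧ L.IsHomogeneous 1 ∧ L ≠ 0 ∧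
      restrictLine q a b = C c * L ^ 4 ∧ eval ![s, t] L = 0

/-- The pairing `⟨·,·⟩` between quartic forms in `x,y,z` and quartic forms in `u,v,w`:
`⟨x^i y^j z^k, u^i v^j w^k⟩ = i!j!k!/2`. -/
def pairQ {R : Type*} [CommRing R] (q h : MvPolynomial (Fin 3) R) : R :=
  ∑ m ∈ q.support,
    (((m 0).factorial * (m 1).factorial * (m 2).factorial / 2 : ℕ) : R)
      * coeff m q * coeff m h

/-- The action of `Σ c_{ξη} ξ ∂_η ∈ 𝔤𝔩₃(R)` on polynomials. -/
def lieAct {R : Type*} [CommRing R] (c : Fin 3 → Fin 3 → R)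
    (q : MvPolynomial (Fin 3) R) : MvPolynomial (Fin 3) R :=
  ∑ ξ : Fin 3, ∑ η : Fin 3, C (c ξ η) * (X ξ * pderiv η q)

/-- substitution of variables by the linear change of coordinates `M`: `q(M·(x,y,z)ᵗ)`. -/
def substM {R : Type*} [CommRing R] (M : Matrix (Fin 3) (Fin 3) R)
    (q : MvPolynomial (Fin 3) R) : MvPolynomial (Fin 3) R :=
  aeval (fun i => ∑ j : Fin 3, C (M i j) * X j) q

/-- The quartic form `q_ε = (x−y)⁴ + (x−z)⁴ + (y−εz)⁴ − (x⁴ + y⁴ + z⁴)`. -/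
def qeps {k : Type*} [CommRing k] (ε : k) : MvPolynomial (Fin 3) k :=
  (X 0 - X 1) ^ 4 + (X 0 - X 2) ^ 4 + (X 1 - C ε * X 2) ^ 4
    - (X 0 ^ 4 + X 1 ^ 4 + X 2 ^ 4)

namespace MvPolynomial

variable {R : Type*} [CommRing R]

theorem homogeneousComponent_mul_of_isHomogeneous_left {σ : Type*} {φ : MvPolynomial σ R}
    {m : ℕ} (hφ : φ.IsHomogeneous m) (n : ℕ) (ψ : MvPolynomial σ R) :
    homogeneousComponent (m + n) (φ * ψ) = φ * homogeneousComponent n ψ := by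
  conv_lhs => rw [← sum_homogeneousComponent ψ, Finset.mul_sum, map_sum]
  rw [Finset.sum_eq_single n]
  · exact homogeneousComponent_eq_self (hφ.mul (homogeneousComponent_isHomogeneous n ψ))
  · intro i _ hin
    rw [homogeneousComponent_of_mem (hφ.mul (homogeneousComponent_isHomogeneous i ψ)),
      if_neg (by omega)]
  · intro hn
    rw [homogeneousComponent_eq_zero n ψ (by simpa using hn), mul_zero, map_zero]

theorem IsHomogeneous.eq_sum_fin_two {φ : MvPolynomial (Fin 2) R} {n : ℕ}
    (hφ : φ.IsHomogeneous n) :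
    φ = ∑ i ∈ Finset.range (n + 1),
      monomial (Finsupp.single 0 (n - i) + Finsupp.single 1 i)
        (coeff (Finsupp.single 0 (n - i) + Finsupp.single 1 i) φ) := by
  ext m
  simp only [coeff_sum, coeff_monomial]
  by_cases hm : m.degree = n
  · rw [Finsupp.degree_eq_sum, Fin.sum_univ_two] at hm
    have key : ∀ i, Finsupp.single 0 (n - i) + Finsupp.single 1 i = m ↔ i = m 1 := by
      intro i
      simp only [Finsupp.ext_iff, Fin.forall_fin_two, Finsupp.add_apply, Finsupp.single_eq_same,
        Finsupp.single_eq_of_ne zero_ne_one, Finsupp.single_eq_of_ne one_ne_zero, add_zero, zero_add]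
      omega
    rw [Finset.sum_congr rfl fun i _ => if_congr (key i) rfl rfl, Finset.sum_ite_eq',
      if_pos (Finset.mem_range.mpr (by omega)), ← hm, Nat.add_sub_cancel]
    congr 1
    ext i
    fin_cases i <;> simp
  · rw [hφ.coeff_eq_zero hm, eq_comm]
    refine Finset.sum_eq_zero fun i hi => if_neg ?_
    rintro rfl
    simp only [map_add, Finsupp.degree_single] at hm
    rw [Finset.mem_range] at hi
    omega

theorem monomial_single_add_single (a b : ℕ) (c : R) :
    monomial (Finsupp.single 0 a + Finsupp.single 1 b) c =
      (C c * X 0 ^ a * X 1 ^ b : MvPolynomial (Fin 2) R) := by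
  rw [mul_assoc, X_pow_eq_monomial, X_pow_eq_monomial, monomial_mul, one_mul, C_mul_monomial,
    mul_one]

theorem IsHomogeneous.exists_eq_linear {φ : MvPolynomial (Fin 2) R} (hφ : φ.IsHomogeneous 1) :
    ∃ p q : R, φ = C p * X 0 + C q * X 1 :=
  ⟨_, _, hφ.eq_sum_fin_two.trans <| by
    simp only [Finset.sum_range_succ, Finset.sum_range_zero, monomial_single_add_single,
      zero_add, Nat.sub_zero, Nat.sub_self, pow_zero, pow_one, mul_one]
    rfl⟩

theorem IsHomogeneous.exists_eq_quadratic {φ : MvPolynomial (Fin 2) R}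
    (hφ : φ.IsHomogeneous 2) :
    ∃ a b c : R, φ = C a * X 0 ^ 2 + C b * X 0 * X 1 + C c * X 1 ^ 2 :=
  ⟨_, _, _, hφ.eq_sum_fin_two.trans <| by
    simp only [Finset.sum_range_succ, Finset.sum_range_zero, monomial_single_add_single,
      zero_add, Nat.sub_zero, Nat.sub_self, Nat.reduceSub, pow_zero, pow_one, mul_one]
    rfl⟩

end MvPolynomial

section BinaryQuartic

variable {R : Type*} [CommRing R]

theorem isHomogeneous_binQuartic (f : Fin 5 → R) : (binQuartic f).IsHomogeneous 4 :=
  IsHomogeneous.sum _ _ _ fun i _ => by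
    simpa [Nat.sub_add_cancel (Nat.le_of_lt_succ i.isLt)] using
      (isHomogeneous_C_mul_X_pow (f i) 0 (4 - i)).mul (isHomogeneous_X_pow (R := R) 1 (i : ℕ))

theorem binCoeff_binQuartic (f : Fin 5 → R) : binCoeff (binQuartic f) = f := by
  funext i
  fin_cases i <;>
    simp [binCoeff, binQuartic, Fin.sum_univ_five, ← monomial_single_add_single, coeff_monomial,
      Finsupp.ext_iff, Fin.forall_fin_two]

theorem binQuartic_injective : Function.Injective (binQuartic (R := R)) :=
  Function.LeftInverse.injective binCoeff_binQuartic

theorem Sinv_eq_sq_of_binQuartic_eq {f : Fin 5 → R} {p q a b c : R}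
    (hf : binQuartic f = (C p * X 0 + C q * X 1) ^ 2 *
      (C a * X 0 ^ 2 + C b * X 0 * X 1 + C c * X 1 ^ 2)) :
    Sinv f = (a * q ^ 2 - b * p * q + c * p ^ 2) ^ 2 := by
  have hcoeffs : f = ![p ^ 2 * a, p ^ 2 * b + 2 * p * q * a, p ^ 2 * c + 2 * p * q * b + q ^ 2 * a,
      2 * p * q * c + q ^ 2 * b, q ^ 2 * c] := by
    refine binQuartic_injective (hf.trans ?_)
    simp only [binQuartic, Fin.sum_univ_five, Matrix.cons_val, map_add, map_mul, map_pow, map_ofNat,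
      Fin.coe_ofNat_eq_mod, Nat.reduceMod, Nat.reduceSub]
    ring
  subst hcoeffs
  simp only [Sinv, Matrix.cons_val]
  ring

end BinaryQuartic

theorem linear_dvd_quadratic_of_eq_zero {k : Type*} [Field k] {p q a b c : k}
    (hpq : p ≠ 0 ∨ q ≠ 0) (h : a * q ^ 2 - b * p * q + c * p ^ 2 = 0) :
    C p * X 0 + C q * X 1 ∣ (C a * X 0 ^ 2 + C b * X 0 * X 1 + C c * X 1 ^ 2 :
      MvPolynomial (Fin 2) k) := by
  suffices ∃ α β : k, a = p * α ∧ b = p * β + q * α ∧ c = q * β by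
    obtain ⟨α, β, rfl, rfl, rfl⟩ := this
    exact ⟨C α * X 0 + C β * X 1, by simp only [map_add, map_mul]; ring⟩
  by_cases hp : p = 0
  · have hq : q ≠ 0 := hpq.resolve_left (not_not.mpr hp)
    subst hp
    refine ⟨b / q, c / q, ?_, ?_, ?_⟩
    · simpa [hq] using h
    · field_simp; ring
    · field_simp
  · refine ⟨a / p, (b * p - a * q) / p ^ 2, ?_, ?_, ?_⟩
    · field_simp
    · field_simp; ring
    · field_simp; linear_combination h

theorem stmt1_general {k : Type*} [Field k]
    (f : Fin 5 → k) (hS : Sinv f = 0)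
    (hsq : ∃ L : MvPolynomial (Fin 2) k, L.IsHomogeneous 1 ∧ L ≠ 0 ∧
      L ^ 2 ∣ binQuartic f) :
    ∃ L : MvPolynomial (Fin 2) k, L.IsHomogeneous 1 ∧ L ≠ 0 ∧
      L ^ 3 ∣ binQuartic f := by
  obtain ⟨L, hL, hL0, Q, hfQ⟩ := hsq
  have hfQ₂ : binQuartic f = L ^ 2 * homogeneousComponent 2 Q :=
    calc binQuartic f = homogeneousComponent 4 (binQuartic f) :=
          (homogeneousComponent_eq_self (isHomogeneous_binQuartic f)).symm
      _ = L ^ 2 * homogeneousComponent 2 Q := by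
          rw [hfQ]
          exact homogeneousComponent_mul_of_isHomogeneous_left (hL.pow 2) 2 Q
  obtain ⟨p, q, rfl⟩ := hL.exists_eq_linear
  obtain ⟨a, b, c, hQ₂⟩ := (homogeneousComponent_isHomogeneous 2 Q).exists_eq_quadratic
  rw [hQ₂] at hfQ₂
  have hroot : a * q ^ 2 - b * p * q + c * p ^ 2 = 0 :=
    pow_eq_zero_iff two_ne_zero |>.mp (Sinv_eq_sq_of_binQuartic_eq hfQ₂ ▸ hS)
  have hpq : p ≠ 0 ∨ q ≠ 0 := by
    contrapose! hL0
    simp [hL0]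
  refine ⟨_, hL, hL0, ?_⟩
  rw [hfQ₂, pow_succ]
  exact mul_dvd_mul_left _ (linear_dvd_quadratic_of_eq_zero hpq hroot)

/-- Over an algebraically closed field, a nonzero binary quartic form with
vanishing invariant `S` that is divisible by the square of a nonzero linear form is divisible
by the cube of a nonzero linear form. -/
theorem stmt1 {k : Type*} [Field k] [IsAlgClosed k]
    (f : Fin 5 → k) (hf : binQuartic f ≠ 0) (hS : Sinv f = 0)
    (hsq : ∃ L : MvPolynomial (Fin 2) k, L.IsHomogeneous 1 ∧ L ≠ 0 ∧
      L ^ 2 ∣ binQuartic f) :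
    ∃ L : MvPolynomial (Fin 2) k, L.IsHomogeneous 1 ∧ L ≠ 0 ∧
      L ^ 3 ∣ binQuartic f :=
  stmt1_general f hS hsq
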